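/- arXiv:1712.02690 — 2 statements merged into one kernel-verified Lean document; each statement's English description precedes it below -/
import Mathlib

section
/- Let ε ∈ [0,1) and let k ≥ 1 be an integer. If (δ₀,…,δ_{k−1}) ∈ (0,1)^k is a critical point of R_ε, i.e., all k partial derivatives ∂R_ε/∂δ_j vanish at (δ₀,…,δ_{k−1}), then (δ₀,…,δ_{k−1}) satisfies the recursion (∗): δ_j = δ_{j+1} / (δ_{j+1} + (1−δ_{j+1})·((1−δ_{j+1})/(1−δ_{j+2}))^{ε̄}) for every j = 0,…,k−2, with the convention δ̄_k := 1. -/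
/-! Write `R = N / D`, `w_i = ε̄^(i+1)` and `P_i = δ₀ ⋯ δ_{i-1}`. Along the coordinate `δ_j`
every term of index `> j` of `N` and every term of index `≥ j` of `D` is linear in `δ_j`, so
`δ_j ∂R/∂δ_j = 0` reads `w_j P_{j+1} H₂'(δ_j) + T_{j+1} = R S_j`, with `T`, `S` the tails of the
numerator and denominator sums. Subtracting consecutive equations and using
`y H₂'(y) - H₂(y) = log₂(1 - y)` gives `H₂'(δ_j) = R + ε̄ log₂(1 - δ_{j+1})` (with `1 - δ_k := 1`).
The difference of two consecutive instances is
`log₂((1-δ_j)/δ_j) = log₂((1-δ_{j+1})/δ_{j+1}) + ε̄ log₂((1-δ_{j+1})/(1-δ_{j+2}))`,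
which is the recursion solved for `δ_j`. -/

/-- The binary entropy function (base 2), with `H2 0 = H2 1 = 0`. -/
noncomputable def H2 (x : ℝ) : ℝ := -(x * Real.logb 2 x) - (1 - x) * Real.logb 2 (1 - x)

/-- The function `R_ε(δ₀,…,δ_{k−1})`. -/
noncomputable def Rfun (ε : ℝ) (k : ℕ) (δ : ℕ → ℝ) : ℝ :=
  (∑ i ∈ Finset.range k, (1 - ε) ^ (i + 1) * H2 (δ i) * ∏ m ∈ Finset.range i, δ m) /
  (1 + ∑ i ∈ Finset.range k, (1 - ε) ^ (i + 1) * ∏ m ∈ Finset.range (i + 1), δ m)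

/-- The recursion (∗), with the convention `δ̄_k := 1`. -/
def SatisfiesRec (ε : ℝ) (k : ℕ) (δ : ℕ → ℝ) : Prop :=
  ∀ j : ℕ, j + 2 ≤ k →
    δ j = δ (j + 1) /
      (δ (j + 1) + (1 - δ (j + 1)) *
        ((1 - δ (j + 1)) / (if j + 2 = k then 1 else 1 - δ (j + 2))) ^ (1 - ε))

open Finset Function Real

noncomputable def H2deriv (x : ℝ) : ℝ := logb 2 (1 - x) - logb 2 x

lemma hasDerivAt_H2 {x : ℝ} (h0 : x ≠ 0) (h1 : x ≠ 1) : HasDerivAt H2 (H2deriv x) x := by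
  have hlog : HasDerivAt (fun y => y * log y) (log x + 1) x := hasDerivAt_mul_log h0
  have hlog' : HasDerivAt (fun y => (1 - y) * log (1 - y)) ((log (1 - x) + 1) * (-1)) x :=
    (hasDerivAt_mul_log (sub_ne_zero.2 h1.symm)).comp x ((hasDerivAt_id x).const_sub 1)
  have hH2 : H2 = fun y => (-(y * log y) - (1 - y) * log (1 - y)) / log 2 := by
    funext y
    simp only [H2, logb]
    ring
  rw [hH2]
  refine ((hlog.neg.sub hlog').div_const (log 2)).congr_deriv ?_
  simp only [H2deriv, logb]
  ring

lemma mul_H2deriv_sub_H2 (x : ℝ) : x * H2deriv x - H2 x = logb 2 (1 - x) := by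
  simp only [H2deriv, H2]
  ring

lemma eq_div_of_H2deriv_eq_add_logb {x y W : ℝ} (hx : x ∈ Set.Ioo 0 1) (hy : y ∈ Set.Ioo 0 1)
    (hW : 0 < W) (h : H2deriv x = H2deriv y + logb 2 W) : x = y / (y + (1 - y) * W) := by
  obtain ⟨hx0, hx1⟩ := hx
  obtain ⟨hy0, hy1⟩ := hy
  have hx1' : 0 < 1 - x := sub_pos.2 hx1
  have hy1' : 0 < 1 - y := sub_pos.2 hy1
  have hodds : (1 - x) / x = (1 - y) / y * W := by
    refine logb_injOn_pos one_lt_two (div_pos hx1' hx0) (mul_pos (div_pos hy1' hy0) hW) ?_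
    rw [logb_mul (div_pos hy1' hy0).ne' hW.ne', logb_div hx1'.ne' hx0.ne',
      logb_div hy1'.ne' hy0.ne']
    exact h
  field_simp at hodds
  rw [eq_div_iff (by positivity)]
  linear_combination -hodds

lemma Finset.prod_update_eq_div_mul {ι M : Type*} [DecidableEq ι] [CommGroupWithZero M]
    {s : Finset ι} {f : ι → M} {i : ι} (hi : i ∈ s) (hf : f i ≠ 0) (b : M) :
    ∏ x ∈ s, update f i b x = b / f i * ∏ x ∈ s, f x := by
  rw [prod_update_of_mem hi, ← mul_prod_erase s f hi, sdiff_singleton_eq_erase, ← mul_assoc,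
    div_mul_cancel₀ b hf]

section Rfun

variable (ε : ℝ) (δ : ℕ → ℝ)

noncomputable def Rnum (s : Finset ℕ) : ℝ :=
  ∑ i ∈ s, (1 - ε) ^ (i + 1) * H2 (δ i) * ∏ m ∈ range i, δ m

noncomputable def Rden (s : Finset ℕ) : ℝ :=
  ∑ i ∈ s, (1 - ε) ^ (i + 1) * ∏ m ∈ range (i + 1), δ m

lemma Rfun_eq (k : ℕ) : Rfun ε k δ = Rnum ε δ (range k) / (1 + Rden ε δ (range k)) := rfl

variable {j k : ℕ}

lemma Rnum_range_eq_add (hj : j ≤ k) :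
    Rnum ε δ (range k) = Rnum ε δ (range j) + Rnum ε δ (Ico j k) :=
  (sum_range_add_sum_Ico _ hj).symm

lemma Rden_range_eq_add (hj : j ≤ k) :
    Rden ε δ (range k) = Rden ε δ (range j) + Rden ε δ (Ico j k) :=
  (sum_range_add_sum_Ico _ hj).symm

lemma Rnum_Ico_eq_add (hj : j < k) :
    Rnum ε δ (Ico j k) =
      (1 - ε) ^ (j + 1) * H2 (δ j) * ∏ m ∈ range j, δ m + Rnum ε δ (Ico (j + 1) k) :=
  sum_eq_sum_Ico_succ_bot hj _

lemma Rden_Ico_eq_add (hj : j < k) :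
    Rden ε δ (Ico j k) =
      (1 - ε) ^ (j + 1) * ∏ m ∈ range (j + 1), δ m + Rden ε δ (Ico (j + 1) k) :=
  sum_eq_sum_Ico_succ_bot hj _

lemma one_add_Rden_pos (hε : ε ≤ 1) (hδ : ∀ i < k, 0 ≤ δ i) : 0 < 1 + Rden ε δ (range k) := by
  have hsum : 0 ≤ Rden ε δ (range k) := by
    refine sum_nonneg fun i hi => mul_nonneg (pow_nonneg (sub_nonneg.2 hε) _) ?_
    exact prod_nonneg fun m hm => hδ m (by simp at hi hm; omega)
  linarith

variable {δ} {s : Finset ℕ} (t : ℝ)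

lemma Rnum_update_of_lt (hs : ∀ i ∈ s, i < j) : Rnum ε (update δ j t) s = Rnum ε δ s := by
  refine sum_congr rfl fun i hi => ?_
  rw [update_of_ne (hs i hi).ne, prod_update_of_notMem (by simpa using (hs i hi).le)]

lemma Rden_update_of_lt (hs : ∀ i ∈ s, i < j) : Rden ε (update δ j t) s = Rden ε δ s := by
  refine sum_congr rfl fun i hi => ?_
  rw [prod_update_of_notMem (by simpa using hs i hi)]

lemma Rnum_update_of_gt (hδ : δ j ≠ 0) (hs : ∀ i ∈ s, j < i) :
    Rnum ε (update δ j t) s = t / δ j * Rnum ε δ s := by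
  unfold Rnum
  rw [mul_sum]
  refine sum_congr rfl fun i hi => ?_
  rw [update_of_ne (hs i hi).ne', prod_update_eq_div_mul (mem_range.2 (hs i hi)) hδ]
  ring

lemma Rden_update_of_ge (hδ : δ j ≠ 0) (hs : ∀ i ∈ s, j ≤ i) :
    Rden ε (update δ j t) s = t / δ j * Rden ε δ s := by
  unfold Rden
  rw [mul_sum]
  refine sum_congr rfl fun i hi => ?_
  rw [prod_update_eq_div_mul (mem_range.2 (Nat.lt_succ_of_le (hs i hi))) hδ]
  ring

lemma Rnum_update_range (hj : j < k) (hδ : δ j ≠ 0) :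
    Rnum ε (update δ j t) (range k) =
      Rnum ε δ (range j) + (1 - ε) ^ (j + 1) * (∏ m ∈ range j, δ m) * H2 t
        + t / δ j * Rnum ε δ (Ico (j + 1) k) := by
  rw [Rnum_range_eq_add _ _ hj.le, Rnum_Ico_eq_add _ _ hj, update_self,
    prod_update_of_notMem (by simp), Rnum_update_of_lt _ _ fun i hi => mem_range.1 hi,
    Rnum_update_of_gt _ _ hδ fun i hi => (mem_Ico.1 hi).1]
  ring

lemma Rden_update_range (hj : j ≤ k) (hδ : δ j ≠ 0) :
    Rden ε (update δ j t) (range k) = Rden ε δ (range j) + t / δ j * Rden ε δ (Ico j k) := by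
  rw [Rden_range_eq_add _ _ hj, Rden_update_of_lt _ _ fun i hi => mem_range.1 hi,
    Rden_update_of_ge _ _ hδ fun i hi => (mem_Ico.1 hi).1]

end Rfun

section Critical

variable {ε : ℝ} {δ : ℕ → ℝ} {j k : ℕ}

lemma weighted_H2deriv_add_Rnum_eq_of_deriv_eq_zero (hj : j < k) (hδj : δ j ∈ Set.Ioo 0 1)
    (hD : 1 + Rden ε δ (range k) ≠ 0)
    (hcrit : deriv (fun t => Rfun ε k (update δ j t)) (δ j) = 0) :
    (1 - ε) ^ (j + 1) * (∏ m ∈ range (j + 1), δ m) * H2deriv (δ j) + Rnum ε δ (Ico (j + 1) k) =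
      Rfun ε k δ * Rden ε δ (Ico j k) := by
  have hδ0 : δ j ≠ 0 := hδj.1.ne'
  set B := (1 - ε) ^ (j + 1) * ∏ m ∈ range j, δ m
  set T := Rnum ε δ (Ico (j + 1) k)
  set S := Rden ε δ (Ico j k)
  have hnum : HasDerivAt (fun t => Rnum ε (update δ j t) (range k))
      (B * H2deriv (δ j) + T / δ j) (δ j) := by
    rw [funext fun t => Rnum_update_range ε t hj hδ0]
    refine ((((hasDerivAt_H2 hδ0 hδj.2.ne).const_mul B).const_add _).add
      (((hasDerivAt_id' (δ j)).div_const (δ j)).mul_const T)).congr_deriv ?_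
    ring
  have hden : HasDerivAt (fun t => Rden ε (update δ j t) (range k)) (S / δ j) (δ j) := by
    rw [funext fun t => Rden_update_range ε t hj.le hδ0]
    refine ((((hasDerivAt_id' (δ j)).div_const (δ j)).mul_const S).const_add _).congr_deriv ?_
    ring
  have hR := hnum.div (hden.const_add 1) (by rwa [update_eq_self])
  rw [update_eq_self] at hR
  replace hR : HasDerivAt (fun t => Rfun ε k (update δ j t)) _ (δ j) := hR
  rw [hR.deriv, div_eq_zero_iff, or_iff_left (pow_ne_zero 2 hD), sub_eq_zero] at hcrit
  rw [Rfun_eq, prod_range_succ]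
  field_simp
  field_simp at hcrit
  linear_combination hcrit

lemma H2deriv_eq_of_critical (hε : ε < 1) (hδ : ∀ i < k, δ i ∈ Set.Ioo 0 1)
    (hcrit : ∀ i < k, deriv (fun t => Rfun ε k (update δ i t)) (δ i) = 0) (hj : j < k) :
    H2deriv (δ j) = Rfun ε k δ + (1 - ε) * logb 2 (if j + 1 = k then 1 else 1 - δ (j + 1)) := by
  have hD := (one_add_Rden_pos ε δ hε.le fun i hi => (hδ i hi).1.le).ne'
  have hw : (1 - ε) ^ (j + 1) * ∏ m ∈ range (j + 1), δ m ≠ 0 :=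
    mul_ne_zero (pow_ne_zero _ (sub_ne_zero.2 hε.ne'))
      (prod_ne_zero_iff.2 fun m hm => (hδ m (by simp at hm; omega)).1.ne')
  have hFj := weighted_H2deriv_add_Rnum_eq_of_deriv_eq_zero hj (hδ j hj) hD (hcrit j hj)
  rw [Rden_Ico_eq_add ε δ hj] at hFj
  refine mul_left_cancel₀ hw ?_
  split_ifs with hjk
  · subst hjk
    simp only [Rnum, Rden, Ico_self, sum_empty] at hFj
    rw [logb_one]
    linear_combination hFj
  · have hj1 : j + 1 < k := by omega
    have hFj1 :=
      weighted_H2deriv_add_Rnum_eq_of_deriv_eq_zero hj1 (hδ _ hj1) hD (hcrit _ hj1)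
    rw [Rnum_Ico_eq_add ε δ hj1] at hFj
    rw [prod_range_succ δ (j + 1)] at hFj1
    linear_combination hFj - hFj1 + (1 - ε) ^ (j + 2) * (∏ m ∈ range (j + 1), δ m) *
      mul_H2deriv_sub_H2 (δ (j + 1))

end Critical

theorem critical_point_satisfies_recursion_general
    (ε : ℝ) (hε : ε ∈ Set.Ico (0 : ℝ) 1) (k : ℕ)
    (δ : ℕ → ℝ) (hδ : ∀ i < k, δ i ∈ Set.Ioo (0 : ℝ) 1)
    (hcrit : ∀ j < k,
      deriv (fun t : ℝ => Rfun ε k (Function.update δ j t)) (δ j) = 0) :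
    SatisfiesRec ε k δ := by
  intro j hj
  have hy := hδ (j + 1) (by omega)
  have hu : 0 < if j + 2 = k then (1 : ℝ) else 1 - δ (j + 2) := by
    split_ifs
    · exact one_pos
    · exact sub_pos.2 (hδ (j + 2) (by omega)).2
  have hW := rpow_pos_of_pos (div_pos (sub_pos.2 hy.2) hu) (1 - ε)
  refine eq_div_of_H2deriv_eq_add_logb (hδ j (by omega)) hy hW ?_
  rw [H2deriv_eq_of_critical hε.2 hδ hcrit (by omega : j < k),
    H2deriv_eq_of_critical hε.2 hδ hcrit (by omega : j + 1 < k), if_neg (by omega),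
    logb_rpow_eq_mul_logb_of_pos (div_pos (sub_pos.2 hy.2) hu),
    logb_div (sub_pos.2 hy.2).ne' hu.ne']
  ring

/-- Let `ε ∈ [0,1)` and `k ≥ 1`.  If `(δ₀,…,δ_{k−1}) ∈ (0,1)^k` is a critical point of
`R_ε`, i.e. all `k` partial derivatives `∂R_ε/∂δ_j` vanish there, then it satisfies the
recursion (∗). -/
theorem critical_point_satisfies_recursion
    (ε : ℝ) (hε : ε ∈ Set.Ico (0 : ℝ) 1) (k : ℕ) (hk : 1 ≤ k)
    (δ : ℕ → ℝ) (hδ : ∀ i < k, δ i ∈ Set.Ioo (0 : ℝ) 1)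
    (hcrit : ∀ j < k,
      deriv (fun t : ℝ => Rfun ε k (Function.update δ j t)) (δ j) = 0) :
    SatisfiesRec ε k δ :=
  critical_point_satisfies_recursion_general ε hε k δ hδ hcrit
end

section
/- Let ε ∈ [0,1) and let k ≥ 1 be an integer. For every fixed (δ₁,…,δ_{k−1}) ∈ [0,1]^{k−1}, there exists a unique δ₀ ∈ (0, 1/2) such that the partial derivative of R_ε with respect to its first argument vanishes at (δ₀, δ₁,…,δ_{k−1}), i.e., ∂R_ε/∂δ₀ (δ₀, δ₁,…,δ_{k−1}) = 0. -/
/-!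
Write `a = 1 - ε`. Since `δ₀` is a common factor of every product in `R_ε` except the leading
ones, `R_ε(s, δ₁, …) = a · (H₂ s + S s) / (1 + B s)` with constants `S, B` depending only on
`δ₁, …, δ_{k-1}`. By the identity `t H₂'(t) - H₂(t) = log₂ (1 - t)`, the derivative in `s`
vanishes at `t ∈ (0, 1)` iff `log₂ t - (1 + B) log₂ (1 - t) = S`. The left side is strictly
increasing, tends to `-∞` at `0` and equals `B` at `1/2`, so a unique root in `(0, 1/2)`
exists iff `S < B`; that inequality follows by induction on `k` from `H₂ ≤ 1`.
-/

open Real Set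

lemma StrictMonoOn.existsUnique_mem_Ioo_eq {α β : Type*} [ConditionallyCompleteLinearOrder α]
    [DenselyOrdered α] [TopologicalSpace α] [OrderTopology α] [LinearOrder β] [TopologicalSpace β]
    [OrderClosedTopology β] {f : α → β} {p q x : α} {y : β} (hf : StrictMonoOn f (Ioc p q))
    (hc : ContinuousOn f (Ioc p q)) (hx : x ∈ Ioc p q) (hxy : f x ≤ y) (hyq : y < f q) :
    ∃! t, t ∈ Ioo p q ∧ f t = y := by
  obtain ⟨t, ht, rfl⟩ :=
    intermediate_value_Icc hx.2 (hc.mono (Icc_subset_Ioc hx.1 le_rfl)) ⟨hxy, hyq.le⟩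
  have htq : t ≠ q := by rintro rfl; exact lt_irrefl _ hyq
  refine ⟨t, ⟨⟨hx.1.trans_le ht.1, lt_of_le_of_ne ht.2 htq⟩, rfl⟩, fun s hs => ?_⟩
  exact hf.injOn (Ioo_subset_Ioc_self hs.1) ⟨hx.1.trans_le ht.1, ht.2⟩ hs.2

lemma H2_eq_binEntropy_div (x : ℝ) : H2 x = binEntropy x / log 2 := by
  simp only [H2, binEntropy, logb, log_inv]
  ring

lemma H2_le_one (x : ℝ) : H2 x ≤ 1 := by
  rw [H2_eq_binEntropy_div, div_le_one (log_pos one_lt_two)]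
  exact binEntropy_le_log_two

@[simp]
lemma H2_zero : H2 0 = 0 := by simp [H2]

lemma hasDerivAt_H2_s4 {t : ℝ} (h₀ : t ≠ 0) (h₁ : t ≠ 1) :
    HasDerivAt H2 (logb 2 (1 - t) - logb 2 t) t := by
  rw [funext H2_eq_binEntropy_div, logb, logb, ← sub_div]
  exact (hasDerivAt_binEntropy h₀ h₁).div_const _

/-- For `B = 0` this is the base-2 logit `log₂ (t / (1 - t))`. -/
noncomputable def tiltedLogit (B t : ℝ) : ℝ := logb 2 t - (1 + B) * logb 2 (1 - t)

section tiltedLogit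

variable {B : ℝ}

lemma tiltedLogit_strictMonoOn (hB : -1 ≤ B) : StrictMonoOn (tiltedLogit B) (Ioo 0 1) := by
  intro s hs t ht hst
  have hlog : logb 2 s < logb 2 t := logb_lt_logb one_lt_two hs.1 hst
  have hlog' : logb 2 (1 - t) ≤ logb 2 (1 - s) :=
    logb_le_logb_of_le one_lt_two (by linarith [ht.2]) (by linarith)
  unfold tiltedLogit
  nlinarith

lemma continuousOn_tiltedLogit : ContinuousOn (tiltedLogit B) (Ioo 0 1) := by
  have hlogb : ContinuousOn (logb 2) (Ioi 0) :=
    continuousOn_logb.mono fun x hx => ne_of_gt (mem_Ioi.mp hx)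
  refine (hlogb.mono Ioo_subset_Ioi_self).sub (continuousOn_const.mul ?_)
  exact hlogb.comp (continuousOn_const.sub continuousOn_id) fun x hx => sub_pos.mpr hx.2

lemma logb_two_half : logb 2 (1 / 2) = -1 := by
  rw [one_div, logb_inv, logb_self_eq_one one_lt_two]

lemma tiltedLogit_half : tiltedLogit B (1 / 2) = B := by
  norm_num [tiltedLogit, logb_two_half]

lemma exists_tiltedLogit_le {S : ℝ} (hB : -1 ≤ B) (hSB : S ≤ B) :
    ∃ x ∈ Ioc (0 : ℝ) (1 / 2), tiltedLogit B x ≤ S := by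
  have hhalf : (2 : ℝ) ^ (S - (1 + B)) ≤ 1 / 2 :=
    calc (2 : ℝ) ^ (S - (1 + B)) ≤ 2 ^ (-1 : ℝ) :=
          rpow_le_rpow_of_exponent_le one_le_two (by linarith)
      _ = 1 / 2 := by norm_num [rpow_neg_one]
  refine ⟨2 ^ (S - (1 + B)), ⟨rpow_pos_of_pos two_pos _, hhalf⟩, ?_⟩
  have : -1 ≤ logb 2 (1 - 2 ^ (S - (1 + B))) :=
    logb_two_half ▸ logb_le_logb_of_le one_lt_two (by norm_num) (by linarith)
  rw [tiltedLogit.eq_1, logb_rpow two_pos (by norm_num)]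
  nlinarith

end tiltedLogit

lemma hasDerivAt_entropy_ratio (S B : ℝ) {t : ℝ} (ht : t ∈ Ioo 0 1) (hden : 1 + B * t ≠ 0) :
    HasDerivAt (fun s => (H2 s + S * s) / (1 + B * s))
      ((S - tiltedLogit B t) / (1 + B * t) ^ 2) t := by
  have hnum := (hasDerivAt_H2_s4 ht.1.ne' ht.2.ne).add ((hasDerivAt_id t).const_mul S)
  have hden' := ((hasDerivAt_id t).const_mul B).const_add 1
  refine (hnum.div hden' hden).congr_deriv ?_
  simp only [tiltedLogit, H2, Pi.add_apply, id]
  ring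

lemma existsUnique_deriv_entropy_ratio_eq_zero {S B : ℝ} (hB : -1 ≤ B) (hSB : S < B) :
    ∃! t, t ∈ Ioo 0 (1 / 2) ∧ deriv (fun s => (H2 s + S * s) / (1 + B * s)) t = 0 := by
  have hsub : Ioc (0 : ℝ) (1 / 2) ⊆ Ioo 0 1 := Ioc_subset_Ioo_right (by norm_num)
  have hcrit : ∀ t ∈ Ioo (0 : ℝ) (1 / 2),
      deriv (fun s => (H2 s + S * s) / (1 + B * s)) t = 0 ↔ tiltedLogit B t = S := by
    intro t ht
    have hden : 0 < 1 + B * t := by nlinarith [ht.1, ht.2]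
    rw [(hasDerivAt_entropy_ratio S B (hsub (Ioo_subset_Ioc_self ht)) hden.ne').deriv,
      div_eq_zero_iff, sub_eq_zero, eq_comm]
    have := pow_ne_zero 2 hden.ne'
    tauto
  obtain ⟨x, hx, hxS⟩ := exists_tiltedLogit_le hB hSB.le
  refine (existsUnique_congr fun t => ?_).mpr <|
    ((tiltedLogit_strictMonoOn hB).mono hsub).existsUnique_mem_Ioo_eq
      (continuousOn_tiltedLogit.mono hsub) hx hxS (tiltedLogit_half.symm ▸ hSB)
  exact ⟨fun h => ⟨h.1, (hcrit t h.1).mp h.2⟩, fun h => ⟨h.1, (hcrit t h.1).mpr h.2⟩⟩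

noncomputable def weightedEntropySum (a : ℝ) (d : ℕ → ℝ) (n : ℕ) : ℝ :=
  ∑ i ∈ Finset.range n, a ^ (i + 1) * H2 (d i) * ∏ m ∈ Finset.range i, d m

noncomputable def weightedProdSum (a : ℝ) (d : ℕ → ℝ) (n : ℕ) : ℝ :=
  ∑ i ∈ Finset.range n, a ^ (i + 1) * ∏ m ∈ Finset.range (i + 1), d m

lemma Rfun_eq_div (ε : ℝ) (k : ℕ) (δ : ℕ → ℝ) :
    Rfun ε k δ = weightedEntropySum (1 - ε) δ k / (1 + weightedProdSum (1 - ε) δ k) := rfl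

section weightedSums

variable {a : ℝ} {d : ℕ → ℝ} {n : ℕ}

lemma weightedEntropySum_succ (a : ℝ) (d : ℕ → ℝ) (n : ℕ) :
    weightedEntropySum a d (n + 1) =
      a * H2 (d 0) + a * d 0 * weightedEntropySum a (fun m => d (m + 1)) n := by
  rw [weightedEntropySum, Finset.sum_range_succ', add_comm, weightedEntropySum, Finset.mul_sum]
  congr 1
  · simp
  · refine Finset.sum_congr rfl fun i _ => ?_
    rw [Finset.prod_range_succ']
    ring

lemma weightedProdSum_succ (a : ℝ) (d : ℕ → ℝ) (n : ℕ) :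
    weightedProdSum a d (n + 1) = a * d 0 * (1 + weightedProdSum a (fun m => d (m + 1)) n) := by
  rw [weightedProdSum, Finset.sum_range_succ', weightedProdSum, mul_add, Finset.mul_sum,
    add_comm]
  congr 1
  · simp
  · refine Finset.sum_congr rfl fun i _ => ?_
    rw [Finset.prod_range_succ' _ (i + 1)]
    ring

lemma weightedProdSum_nonneg (ha : 0 ≤ a) (hd : ∀ i < n, 0 ≤ d i) :
    0 ≤ weightedProdSum a d n :=
  Finset.sum_nonneg fun _ hi => mul_nonneg (pow_nonneg ha _) <| Finset.prod_nonneg fun m hm =>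
    hd m <| (Finset.mem_range.mp hm).trans_le (Finset.mem_range.mp hi)

lemma weightedEntropySum_lt (ha : 0 < a) (hd : ∀ i < n, d i ∈ Icc 0 1) :
    weightedEntropySum a d n < a * (1 + weightedProdSum a d n) := by
  induction n generalizing d with
  | zero => simp [weightedEntropySum, weightedProdSum, ha]
  | succ n ih =>
    have ih' := ih (d := fun m => d (m + 1)) fun i hi => hd (i + 1) (by omega)
    rw [weightedEntropySum_succ, weightedProdSum_succ]
    rcases (hd 0 n.succ_pos).1.eq_or_lt with h0 | h0
    · simp [← h0, ha]
    have hH : a * H2 (d 0) ≤ a := mul_le_of_le_one_right ha.le (H2_le_one _)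
    have htail := mul_lt_mul_of_pos_left ih' (mul_pos ha h0)
    linear_combination hH + htail

end weightedSums

lemma Rfun_update_zero (ε s : ℝ) (n : ℕ) (δ : ℕ → ℝ) :
    Rfun ε (n + 1) (Function.update δ 0 s) =
      (1 - ε) * ((H2 s + weightedEntropySum (1 - ε) (fun m => δ (m + 1)) n * s) /
        (1 + (1 - ε) * (1 + weightedProdSum (1 - ε) (fun m => δ (m + 1)) n) * s)) := by
  have hshift : (fun m => Function.update δ 0 s (m + 1)) = fun m => δ (m + 1) :=
    funext fun m => Function.update_of_ne m.succ_ne_zero _ _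
  rw [Rfun_eq_div, weightedEntropySum_succ, weightedProdSum_succ, hshift, Function.update_self]
  ring

/-- Let `ε ∈ [0,1)` and `k ≥ 1`.  For every fixed `(δ₁,…,δ_{k−1}) ∈ [0,1]^{k−1}` there
exists a unique `δ₀ ∈ (0,1/2)` at which the partial derivative of `R_ε` with respect to
its first argument vanishes. -/
theorem exists_unique_vanishing_first_partial
    (ε : ℝ) (hε : ε ∈ Set.Ico (0 : ℝ) 1) (k : ℕ) (hk : 1 ≤ k)
    (δ : ℕ → ℝ) (hδ : ∀ i, 1 ≤ i → i < k → δ i ∈ Set.Icc (0 : ℝ) 1) :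
    ∃! t : ℝ, t ∈ Set.Ioo (0 : ℝ) (1 / 2) ∧
      deriv (fun s : ℝ => Rfun ε k (Function.update δ 0 s)) t = 0 := by
  obtain ⟨n, rfl⟩ : ∃ n, k = n + 1 := ⟨k - 1, by omega⟩
  have ha : 0 < 1 - ε := sub_pos.mpr hε.2
  have hd : ∀ i < n, δ (i + 1) ∈ Icc 0 1 := fun i hi => hδ (i + 1) (by omega) (by omega)
  have hB : -1 ≤ (1 - ε) * (1 + weightedProdSum (1 - ε) (fun m => δ (m + 1)) n) := by
    have := weightedProdSum_nonneg ha.le fun i hi => (hd i hi).1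
    nlinarith
  simp_rw [Rfun_update_zero, deriv_const_mul_field', mul_eq_zero, ha.ne', false_or]
  exact existsUnique_deriv_entropy_ratio_eq_zero hB (weightedEntropySum_lt ha hd)
end
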